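/- arXiv:1909.00940 — 3 statements merged into one kernel-verified Lean document; each statement's English description precedes it below -/
import Mathlib

section
/- Let Δ be the abstract simplicial complex consisting of an n-simplex δ (a set with n+1 elements) together with all its nonempty subsets, let Q be an abstract simplicial complex, let φ: Q → Δ be a simplicial map, and let α ∈ C_n(Q) be an n-chain. If φ_*(∂α) = ∂δ in C_{n−1}(Δ), then φ_*(α) = δ in C_n(Δ). -/
/-!
The pushforward `φ_*` is a chain map over `𝔽₂`: if `φ` is injective on a simplex `σ`, exactly
one facet of `σ` maps onto a given facet of `φ(σ)`; if `φ` identifies two vertices `u ≠ v` of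
`σ`, the only facets on which `φ` can stay injective are `σ \ {u}` and `σ \ {v}`, which have the
same image, so their contributions cancel. Hence `∂ φ_* α = φ_* ∂ α = ∂ δ`. Since `α` is
supported on `n`-simplices mapping into `δ`, `φ_* α = c δ` for some `c ∈ 𝔽₂`, and evaluating
`c ∂ δ = ∂ δ` at a facet of `δ` gives `c = 1`.
-/

open scoped Classical
open Finset

/-- An abstract simplicial complex on the vertex type `V`: a finite collection of
nonempty finite subsets (simplices) closed under passing to nonempty subsets. -/
def IsAbstractComplex {V : Type*} (K : Finset (Finset V)) : Prop :=
  (∀ σ ∈ K, σ.Nonempty) ∧ ∀ σ ∈ K, ∀ τ ⊆ σ, τ.Nonempty → τ ∈ K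

/-- The boundary operator on `𝔽₂`-chains: an `m`-simplex is sent to
the sum of its `(m-1)`-element subsets, extended `𝔽₂`-linearly. -/
noncomputable def chainBoundary {V : Type*} [Fintype V] (c : Finset V → ZMod 2) :
    Finset V → ZMod 2 := fun τ =>
  ∑ σ ∈ Finset.univ.filter (fun σ : Finset V => τ ⊆ σ ∧ σ.card = τ.card + 1), c σ

/-- The map on `𝔽₂`-chains induced by a map of vertices: a simplex is sent to its image
if the image has the same cardinality, and to `0` otherwise, extended `𝔽₂`-linearly. -/
noncomputable def chainPush {V W : Type*} [Fintype V] (φ : V → W)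
    (c : Finset V → ZMod 2) : Finset W → ZMod 2 := fun ρ =>
  ∑ σ ∈ Finset.univ.filter (fun σ : Finset V => σ.image φ = ρ ∧ σ.card = ρ.card), c σ

lemma Finset.sum_filter_sum_filter_eq_sum_card_smul {α β M : Type*} [Fintype α] [Fintype β]
    [AddCommMonoid M] (P : α → Prop) [DecidablePred P] (R : α → β → Prop)
    [∀ x, DecidablePred (R x)] (f : β → M) :
    ∑ x ∈ univ.filter P, ∑ y ∈ univ.filter (R x), f y = ∑ y, #{x | P x ∧ R x y} • f y := by
  rw [sum_comm' (t' := univ) (s' := fun y => univ.filter fun x => P x ∧ R x y) (by simp)]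
  simp only [sum_const]

section Faces

variable {V W : Type*}

lemma card_filter_facet_eq_card_filter_erase [Fintype V] (σ : Finset V) (P : Finset V → Prop)
    [DecidablePred P] :
    #{σ' | P σ' ∧ σ' ⊆ σ ∧ σ.card = σ'.card + 1} = #{v ∈ σ | P (σ.erase v)} := by
  symm
  refine card_nbij (σ.erase ·) (fun v hv => ?_) (σ.erase_injOn.mono fun v hv => ?_) fun σ' hσ' => ?_
  · simp only [coe_filter, mem_univ, true_and] at hv ⊢
    exact ⟨hv.2, erase_subset _ _, (card_erase_add_one hv.1).symm⟩
  · exact (mem_filter.1 hv).1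
  · simp only [coe_filter, mem_univ, true_and] at hσ'
    obtain ⟨hP, hsub, hcard⟩ := hσ'
    have hcov : σ' ⋖ σ :=
      covBy_iff_card_sdiff_eq_one.2 ⟨hsub, by rw [card_sdiff_of_subset hsub]; omega⟩
    obtain ⟨v, hv, rfl⟩ := hcov.exists_finset_erase
    exact ⟨v, by simpa using ⟨hv, hP⟩, rfl⟩

variable (φ : V → W) {σ : Finset V} {ρ : Finset W}

lemma image_erase_of_injOn (hφ : Set.InjOn φ σ) {v : V} (hv : v ∈ σ) :
    (σ.erase v).image φ = (σ.image φ).erase (φ v) := by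
  grind [Set.InjOn]

lemma card_filter_image_erase_eq_one (hφ : Set.InjOn φ σ) (hρ : ρ ⊆ σ.image φ)
    (hcard : σ.card = ρ.card + 1) :
    #{v ∈ σ | (σ.erase v).image φ = ρ ∧ (σ.erase v).card = ρ.card} = 1 := by
  have himage : (σ.image φ).card = ρ.card + 1 := by rw [card_image_of_injOn hφ, hcard]
  obtain ⟨w, hw, hwρ⟩ := exists_of_ssubset (hρ.ssubset_of_ne (by rintro rfl; omega))
  have hρ_eq : (σ.image φ).erase w = ρ :=
    (eq_of_subset_of_card_le (subset_erase.2 ⟨hρ, hwρ⟩) (by rw [card_erase_of_mem hw]; omega)).symm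
  obtain ⟨v₀, hv₀, rfl⟩ := mem_image.1 hw
  rw [card_eq_one]
  refine ⟨v₀, ext fun v => ?_⟩
  simp only [mem_filter, mem_singleton]
  constructor
  · rintro ⟨hv, himg, -⟩
    rw [image_erase_of_injOn φ hφ hv, ← hρ_eq] at himg
    exact hφ hv hv₀ ((erase_inj _ (mem_image_of_mem φ hv)).1 himg)
  · rintro rfl
    refine ⟨hv₀, by rw [image_erase_of_injOn φ hφ hv₀, hρ_eq], ?_⟩
    rw [card_erase_of_mem hv₀]; omega

lemma even_card_filter_image_erase (hφ : ¬ Set.InjOn φ σ) :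
    Even #{v ∈ σ | (σ.erase v).image φ = ρ ∧ (σ.erase v).card = ρ.card} := by
  obtain ⟨u, hu, v, hv, hφuv, huv⟩ : ∃ u ∈ σ, ∃ v ∈ σ, φ u = φ v ∧ u ≠ v := by
    simpa [Set.InjOn] using hφ
  set S := σ.filter fun x => (σ.erase x).image φ = ρ ∧ (σ.erase x).card = ρ.card
  have hS : S ⊆ {u, v} := by
    intro x hx
    obtain ⟨hx, himg, hcard⟩ := mem_filter.1 hx
    have hinj : Set.InjOn φ (σ.erase x) := card_image_iff.1 (by rw [himg, hcard])
    by_contra hxuv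
    simp only [mem_insert, mem_singleton, not_or] at hxuv
    exact huv (hinj (by simp [hu, Ne.symm hxuv.1]) (by simp [hv, Ne.symm hxuv.2]) hφuv)
  have himage_erase : ∀ x ∈ σ, ∀ y ∈ σ, y ≠ x → φ y = φ x →
      (σ.erase x).image φ = σ.image φ := by
    grind
  have hmem : u ∈ S ↔ v ∈ S := by
    simp only [S, mem_filter, card_erase_of_mem hu, card_erase_of_mem hv, hu, hv, true_and,
      himage_erase u hu v hv huv.symm hφuv.symm, himage_erase v hv u hu huv hφuv]
  by_cases huS : u ∈ S
  · rw [subset_antisymm hS (by simp [insert_subset_iff, huS, hmem.1 huS]), card_pair huv]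
    exact even_two
  · have hS_empty : S = ∅ := eq_empty_of_forall_notMem fun x hx => by
      rcases mem_insert.1 (hS hx) with rfl | hxv
      · exact huS hx
      · exact huS (hmem.2 (mem_singleton.1 hxv ▸ hx))
    rw [hS_empty, card_empty]
    exact .zero

lemma cast_card_filter_image_erase :
    (#{v ∈ σ | (σ.erase v).image φ = ρ ∧ (σ.erase v).card = ρ.card} : ZMod 2) =
      if Set.InjOn φ σ ∧ ρ ⊆ σ.image φ ∧ σ.card = ρ.card + 1 then 1 else 0 := by
  by_cases hcard : σ.card = ρ.card + 1
  swap
  · rw [if_neg (by tauto), filter_false_of_mem fun v hv h => hcard ?_, card_empty, Nat.cast_zero]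
    have := card_erase_add_one hv
    omega
  by_cases hφ : Set.InjOn φ σ
  · by_cases hρ : ρ ⊆ σ.image φ
    · rw [if_pos ⟨hφ, hρ, hcard⟩, card_filter_image_erase_eq_one φ hφ hρ hcard, Nat.cast_one]
    · rw [if_neg (by tauto), filter_false_of_mem fun v _ h => hρ ?_, card_empty, Nat.cast_zero]
      exact h.1 ▸ image_subset_image (erase_subset v σ)
  · rw [if_neg (by tauto), ZMod.natCast_eq_zero_iff_even]
    exact even_card_filter_image_erase φ hφ

lemma card_filter_eq_image_eq_ite [Fintype W] :
    #{ρ' | (ρ ⊆ ρ' ∧ ρ'.card = ρ.card + 1) ∧ σ.image φ = ρ' ∧ σ.card = ρ'.card} =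
      if Set.InjOn φ σ ∧ ρ ⊆ σ.image φ ∧ σ.card = ρ.card + 1 then 1 else 0 := by
  simp only [← card_image_iff]
  split_ifs with h
  · rw [card_eq_one]
    exact ⟨σ.image φ, by ext ρ'; simp only [mem_filter, mem_univ, true_and, mem_singleton]; grind⟩
  · rw [card_eq_zero, filter_eq_empty_iff]
    grind

end Faces

section Chains

variable {V W : Type*} [Fintype V]

theorem chainPush_chainBoundary [Fintype W] (φ : V → W) (c : Finset V → ZMod 2) :
    chainPush φ (chainBoundary c) = chainBoundary (chainPush φ c) := by
  funext ρ
  simp only [chainPush, chainBoundary]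
  rw [sum_filter_sum_filter_eq_sum_card_smul, sum_filter_sum_filter_eq_sum_card_smul]
  refine sum_congr rfl fun σ _ => ?_
  rw [card_filter_facet_eq_card_filter_erase σ (fun σ' => σ'.image φ = ρ ∧ σ'.card = ρ.card),
    card_filter_eq_image_eq_ite, nsmul_eq_mul, nsmul_eq_mul, cast_card_filter_image_erase,
    Nat.cast_ite, Nat.cast_one, Nat.cast_zero]

lemma chainBoundary_ite_eq_apply (δ τ : Finset V) (a : ZMod 2) :
    chainBoundary (fun ρ => if ρ = δ then a else 0) τ =
      if τ ⊆ δ ∧ δ.card = τ.card + 1 then a else 0 := by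
  simp [chainBoundary, sum_ite_eq']

lemma chainPush_eq_ite_of_image_subset (φ : V → W) (c : Finset V → ZMod 2) (δ : Finset W)
    (hc : ∀ σ, c σ ≠ 0 → σ.image φ ⊆ δ ∧ σ.card = δ.card) :
    chainPush φ c = fun ρ => if ρ = δ then chainPush φ c δ else 0 := by
  funext ρ
  split_ifs with hρ
  · rw [hρ]
  refine sum_eq_zero fun σ hσ => not_not.1 fun h0 => hρ ?_
  obtain ⟨-, himg, hcard⟩ := mem_filter.1 hσ
  obtain ⟨hsub, hcard'⟩ := hc σ h0
  exact eq_of_subset_of_card_le (himg ▸ hsub) (by omega)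

end Chains

theorem chainPush_eq_of_chainPush_boundary_eq_general {V W : Type*} [Fintype V] [Fintype W]
    (Q : Finset (Finset V))
    (n : ℕ) (δ : Finset W) (hδ : δ.card = n + 1)
    (φ : V → W)
    (hφ : ∀ σ ∈ Q, σ.image φ ∈ δ.powerset.filter fun t => t.Nonempty)
    (α : Finset V → ZMod 2)
    (hα : ∀ σ : Finset V, α σ ≠ 0 → σ ∈ Q ∧ σ.card = n + 1)
    (h : chainPush φ (chainBoundary α)
        = chainBoundary (fun ρ : Finset W => if ρ = δ then 1 else 0)) :
    chainPush φ α = fun ρ : Finset W => if ρ = δ then 1 else 0 := by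
  have hpush := chainPush_eq_ite_of_image_subset φ α δ fun σ hσ =>
    ⟨mem_powerset.1 (mem_filter.1 (hφ σ (hα σ hσ).1)).1, by rw [(hα σ hσ).2, hδ]⟩
  obtain ⟨w, hw⟩ : δ.Nonempty := card_pos.1 (by omega)
  have hfacet := congrFun (chainPush_chainBoundary φ α ▸ h) (δ.erase w)
  have hfacet_cond : δ.erase w ⊆ δ ∧ δ.card = (δ.erase w).card + 1 :=
    ⟨erase_subset w δ, (card_erase_add_one hw).symm⟩
  rw [hpush, chainBoundary_ite_eq_apply, chainBoundary_ite_eq_apply, if_pos hfacet_cond,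
    if_pos hfacet_cond] at hfacet
  rw [hpush, hfacet]

/-- Let `Δ` be the complex consisting of an `n`-simplex `δ` and all its nonempty subsets,
let `φ : Q → Δ` be a simplicial map and let `α` be an `n`-chain of `Q`.
If `φ_* (∂ α) = ∂ δ`, then `φ_* α = δ`. -/
theorem chainPush_eq_of_chainPush_boundary_eq {V W : Type*} [Fintype V] [Fintype W]
    (Q : Finset (Finset V)) (hQ : IsAbstractComplex Q)
    (n : ℕ) (hn : 1 ≤ n) (δ : Finset W) (hδ : δ.card = n + 1)
    (φ : V → W)
    (hφ : ∀ σ ∈ Q, σ.image φ ∈ δ.powerset.filter fun t => t.Nonempty)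
    (α : Finset V → ZMod 2)
    (hα : ∀ σ : Finset V, α σ ≠ 0 → σ ∈ Q ∧ σ.card = n + 1)
    (h : chainPush φ (chainBoundary α)
        = chainBoundary (fun ρ : Finset W => if ρ = δ then 1 else 0)) :
    chainPush φ α = fun ρ : Finset W => if ρ = δ then 1 else 0 :=
  chainPush_eq_of_chainPush_boundary_eq_general Q n δ hδ φ hφ α hα h
end

section
/- Simplicial approximation theorem: Let S and Q be geometric simplicial complexes and let f: |S| → |Q| be a continuous map. Then there exists η > 0 such that for every subdivision S′ of S all of whose simplices have diameter < η, the map f admits a simplicial approximation φ: S′ → Q, i.e. a simplicial map with f(st(v, S′)) ⊆ st(φ(v), Q) for every vertex v of S′. -/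
open scoped Classical
open Finset

/-- A finite geometric simplicial complex in a real vector space `E`: a finite
collection of vertex sets of geometric simplices (finite affinely independent sets),
closed under passing to nonempty subsets (faces), such that the intersection of any two
of its geometric simplices (convex hulls of the vertex sets) is a face of each. -/
structure GeomComplex (E : Type*) [AddCommGroup E] [Module ℝ E] where
  faces : Finset (Finset E)
  nonempty_of_mem : ∀ σ ∈ faces, σ.Nonempty
  indep : ∀ σ ∈ faces, AffineIndependent ℝ ((↑) : σ → E)
  down_closed : ∀ σ ∈ faces, ∀ τ ⊆ σ, τ.Nonempty → τ ∈ faces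
  inter_face : ∀ σ ∈ faces, ∀ τ ∈ faces,
    convexHull ℝ (σ : Set E) ∩ convexHull ℝ (τ : Set E) =
      convexHull ℝ ((σ ∩ τ : Finset E) : Set E)

variable {E : Type*} [AddCommGroup E] [Module ℝ E]

/-- The polyhedron of a geometric simplicial complex: the union of its simplices. -/
def GeomComplex.space (S : GeomComplex E) : Set E :=
  ⋃ σ ∈ S.faces, convexHull ℝ (σ : Set E)

/-- `S'` is a subdivision of `S` if every simplex of `S'` is contained in a simplex of
`S` and every simplex of `S` is the union of the simplices of `S'` contained in it. -/
def IsSubdivision (S' S : GeomComplex E) : Prop :=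
  (∀ σ' ∈ S'.faces, ∃ σ ∈ S.faces,
      convexHull ℝ (σ' : Set E) ⊆ convexHull ℝ (σ : Set E)) ∧
  ∀ σ ∈ S.faces, convexHull ℝ (σ : Set E) =
    ⋃ σ' ∈ S'.faces.filter (fun τ =>
        convexHull ℝ (τ : Set E) ⊆ convexHull ℝ (σ : Set E)),
      convexHull ℝ (σ' : Set E)

/-- The open star of a vertex `v` in a geometric simplicial complex `S`: the union,
over all simplices `σ` of `S` having `v` as a vertex, of the geometric simplex of `σ`
with the face opposite to `v` removed. -/
def openStar (S : GeomComplex E) (v : E) : Set E :=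
  ⋃ σ ∈ S.faces.filter (fun σ => v ∈ σ),
    (convexHull ℝ (σ : Set E) \ convexHull ℝ ((σ.erase v : Finset E) : Set E))


section Helpers

lemma my_weights_eq {σ : Finset E} (h : AffineIndependent ℝ ((↑) : σ → E))
    {a b : E → ℝ} (ha1 : ∑ x ∈ σ, a x = 1) (hb1 : ∑ x ∈ σ, b x = 1)
    (hab : ∑ x ∈ σ, a x • x = ∑ x ∈ σ, b x • x) : ∀ x ∈ σ, a x = b x := by
  have hsa : ∑ i : σ, a i = 1 := by rw [Finset.sum_coe_sort σ a]; exact ha1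
  have hsb : ∑ i : σ, b i = 1 := by rw [Finset.sum_coe_sort σ b]; exact hb1
  have hca : (Finset.univ : Finset σ).affineCombination ℝ ((↑) : σ → E) (fun i => a i)
      = ∑ x ∈ σ, a x • x := by
    rw [affineCombination_eq_centerMass hsa, Finset.centerMass_eq_of_sum_1 _ _ hsa]
    exact Finset.sum_coe_sort σ (fun x => a x • x)
  have hcb : (Finset.univ : Finset σ).affineCombination ℝ ((↑) : σ → E) (fun i => b i)
      = ∑ x ∈ σ, b x • x := by
    rw [affineCombination_eq_centerMass hsb, Finset.centerMass_eq_of_sum_1 _ _ hsb]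
    exact Finset.sum_coe_sort σ (fun x => b x • x)
  have hind := h.indicator_eq_of_affineCombination_eq Finset.univ Finset.univ
    (fun i => a i) (fun i => b i) hsa hsb (by rw [hca, hcb]; exact hab)
  intro x hx
  have := congrFun hind ⟨x, hx⟩
  simpa [Set.indicator] using this

/-- Membership in the convex hull of a finset gives convex weights. -/
lemma my_hull_mem {σ : Finset E} {y : E} (hy : y ∈ convexHull ℝ (σ : Set E)) :
    ∃ a : E → ℝ, (∀ x ∈ σ, 0 ≤ a x) ∧ ∑ x ∈ σ, a x = 1 ∧ ∑ x ∈ σ, a x • x = y := by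
  rw [Finset.convexHull_eq] at hy
  obtain ⟨a, h0, h1, hc⟩ := hy
  exact ⟨a, h0, h1, by rw [← hc, Finset.centerMass_eq_of_sum_1 _ _ h1]; simp⟩

/-- A point with positive barycentric coordinate at `v` lies outside the face
opposite to `v`. -/
lemma my_not_mem_erase {σ : Finset E} (h : AffineIndependent ℝ ((↑) : σ → E))
    {a : E → ℝ} (ha0 : ∀ x ∈ σ, 0 ≤ a x) (ha1 : ∑ x ∈ σ, a x = 1)
    {v : E} (hv : v ∈ σ) (hav : 0 < a v) :
    (∑ x ∈ σ, a x • x) ∉ convexHull ℝ ((σ.erase v : Finset E) : Set E) := by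
  intro hmem
  obtain ⟨w, hw0, hw1, hwc⟩ := my_hull_mem hmem
  set b : E → ℝ := fun x => if x = v then 0 else w x with hb
  have hb1 : ∑ x ∈ σ, b x = 1 := by
    have : ∑ x ∈ σ, b x = ∑ x ∈ σ.erase v, w x := by
      rw [← Finset.add_sum_erase _ _ hv]
      simp only [hb, if_pos rfl, zero_add]
      exact Finset.sum_congr rfl fun x hx => by simp [Finset.ne_of_mem_erase hx]
    rw [this, hw1]
  have hbc : ∑ x ∈ σ, b x • x = ∑ x ∈ σ, a x • x := by
    have : ∑ x ∈ σ, b x • x = ∑ x ∈ σ.erase v, w x • x := by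
      rw [← Finset.add_sum_erase _ _ hv]
      simp only [hb, if_pos rfl, zero_smul, zero_add]
      exact Finset.sum_congr rfl fun x hx => by simp [Finset.ne_of_mem_erase hx]
    rw [this, hwc]
  have := my_weights_eq h ha1 hb1 hbc.symm v hv
  rw [hb] at this
  simp only [if_pos] at this
  linarith

lemma my_mem_openStar {S : GeomComplex E} {v y : E} :
    y ∈ openStar S v ↔ ∃ σ ∈ S.faces, v ∈ σ ∧ y ∈ convexHull ℝ (σ : Set E) ∧
      y ∉ convexHull ℝ ((σ.erase v : Finset E) : Set E) := by
  simp only [openStar, Set.mem_iUnion, Finset.mem_filter, Set.mem_diff, exists_prop]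
  tauto

lemma my_hull_subset_space {S : GeomComplex E} {σ : Finset E} (hσ : σ ∈ S.faces) :
    convexHull ℝ (σ : Set E) ⊆ S.space :=
  Set.subset_biUnion_of_mem (u := fun σ : Finset E => convexHull ℝ (σ : Set E)) hσ

/-- If `y` lies in the open star of `w` and in the geometric simplex of a face `τ`,
then `w` is a vertex of `τ`. -/
lemma my_mem_face_of_openStar {Q : GeomComplex E} {w y : E} {τ : Finset E}
    (hτ : τ ∈ Q.faces) (hy : y ∈ openStar Q w) (hyτ : y ∈ convexHull ℝ (τ : Set E)) :
    w ∈ τ := by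
  obtain ⟨σ, hσ, hwσ, hy1, hy2⟩ := my_mem_openStar.mp hy
  by_contra hwτ
  have hmem : y ∈ convexHull ℝ ((σ ∩ τ : Finset E) : Set E) := by
    rw [← Q.inter_face σ hσ τ hτ]; exact ⟨hy1, hyτ⟩
  refine hy2 (convexHull_mono ?_ hmem)
  intro x hx
  simp only [Finset.coe_inter, Set.mem_inter_iff, Finset.mem_coe] at hx
  simp only [Finset.coe_erase, Set.mem_diff, Finset.mem_coe, Set.mem_singleton_iff]
  exact ⟨hx.1, fun hxw => hwτ (hxw ▸ hx.2)⟩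

/-- The union of the faces opposite to `w` together with the simplices not
containing `w`; a compact set. -/
def oppSet (Q : GeomComplex E) (w : E) : Set E :=
  ⋃ σ ∈ Q.faces, convexHull ℝ ((σ.erase w : Finset E) : Set E)

/-- The open star is the polyhedron minus the compact opposite set. -/
lemma my_openStar_eq (Q : GeomComplex E) (w : E) :
    openStar Q w = Q.space \ oppSet Q w := by
  ext y
  constructor
  · intro hy
    obtain ⟨σ₀, hσ₀, hwσ₀, hy1, hy2⟩ := my_mem_openStar.mp hy
    refine ⟨my_hull_subset_space hσ₀ hy1, ?_⟩
    intro hyo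
    simp only [oppSet, Set.mem_iUnion, exists_prop] at hyo
    obtain ⟨σ, hσ, hyσ⟩ := hyo
    rcases Finset.eq_empty_or_nonempty (σ.erase w) with he | hne
    · simp [he] at hyσ
    · have hτ : σ.erase w ∈ Q.faces := Q.down_closed σ hσ _ (Finset.erase_subset _ _) hne
      exact Finset.notMem_erase w σ (my_mem_face_of_openStar hτ hy hyσ)
  · rintro ⟨hys, hyo⟩
    simp only [GeomComplex.space, Set.mem_iUnion, exists_prop] at hys
    obtain ⟨σ, hσ, hyσ⟩ := hys
    have hwσ : w ∈ σ := by
      by_contra hw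
      exact hyo (Set.mem_biUnion hσ (by rwa [Finset.erase_eq_of_notMem hw]))
    exact my_mem_openStar.mpr ⟨σ, hσ, hwσ, hyσ,
      fun hcon => hyo (Set.mem_biUnion hσ hcon)⟩

/-- The open stars of the vertices cover the polyhedron. -/
lemma my_space_subset_star (Q : GeomComplex E) {y : E} (hy : y ∈ Q.space) :
    ∃ w ∈ Q.faces.biUnion id, y ∈ openStar Q w := by
  simp only [GeomComplex.space, Set.mem_iUnion, exists_prop] at hy
  obtain ⟨σ, hσ, hyσ⟩ := hy
  obtain ⟨a, h0, h1, hc⟩ := my_hull_mem hyσ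
  have hex : ∃ v ∈ σ, 0 < a v := by
    by_contra hcon
    push_neg at hcon
    have : ∑ x ∈ σ, a x ≤ 0 := Finset.sum_nonpos hcon
    linarith
  obtain ⟨v, hv, hav⟩ := hex
  refine ⟨v, Finset.mem_biUnion.mpr ⟨σ, hσ, hv⟩, my_mem_openStar.mpr ⟨σ, hσ, hv, hyσ, ?_⟩⟩
  rw [← hc]
  exact my_not_mem_erase (Q.indep σ hσ) h0 h1 hv hav

end Helpers

/-- The simplicial approximation theorem: for every continuous map `f : |S| → |Q|`
there is an `η > 0` such that for every subdivision `S'` of `S` all of whose simplices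
have diameter `< η`, the map `f` admits a simplicial approximation `φ : S' → Q`,
i.e. a simplicial map with `f (st (v, S')) ⊆ st (φ v, Q)` for every vertex `v` of
`S'`. -/
theorem simplicial_approximation (d e : ℕ)
    (S : GeomComplex (EuclideanSpace ℝ (Fin d)))
    (Q : GeomComplex (EuclideanSpace ℝ (Fin e)))
    (f : EuclideanSpace ℝ (Fin d) → EuclideanSpace ℝ (Fin e))
    (hfc : ContinuousOn f S.space) (hfm : Set.MapsTo f S.space Q.space) :
    ∃ η : ℝ, 0 < η ∧
      ∀ S' : GeomComplex (EuclideanSpace ℝ (Fin d)), IsSubdivision S' S →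
        (∀ σ ∈ S'.faces,
          Metric.diam (convexHull ℝ (σ : Set (EuclideanSpace ℝ (Fin d)))) < η) →
        ∃ φ : EuclideanSpace ℝ (Fin d) → EuclideanSpace ℝ (Fin e),
          (∀ σ ∈ S'.faces, σ.image φ ∈ Q.faces) ∧
          ∀ v ∈ S'.faces.biUnion id, f '' openStar S' v ⊆ openStar Q (φ v) := by
  classical
  have hKc : IsCompact S.space :=
    S.faces.isCompact_biUnion (fun σ _ => σ.finite_toSet.isCompact_convexHull ℝ)
  haveI : CompactSpace S.space := isCompact_iff_compactSpace.mp hKc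
  have hg : Continuous (S.space.restrict f) := hfc.restrict
  have hoppc : ∀ w : EuclideanSpace ℝ (Fin e), IsCompact (oppSet Q w) := fun w =>
    Q.faces.isCompact_biUnion (fun σ _ => by convert (σ.erase w).finite_toSet.isCompact_convexHull ℝ)
  set ι := {w : EuclideanSpace ℝ (Fin e) // w ∈ Q.faces.biUnion id} with hι
  set c : ι → Set S.space := fun w => (S.space.restrict f) ⁻¹' (oppSet Q ↑w)ᶜ with hc
  have hco : ∀ w : ι, IsOpen (c w) := fun w =>
    ((hoppc ↑w).isClosed.isOpen_compl).preimage hg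
  have hcov : (Set.univ : Set S.space) ⊆ ⋃ w : ι, c w := by
    intro x _
    obtain ⟨w, hw, hst⟩ := my_space_subset_star Q (hfm x.2)
    rw [my_openStar_eq] at hst
    exact Set.mem_iUnion.mpr ⟨⟨w, by convert hw⟩, hst.2⟩
  obtain ⟨δ, hδpos, hle⟩ := lebesgue_number_lemma_of_metric isCompact_univ hco hcov
  refine ⟨δ, hδpos, ?_⟩
  intro S' hsub hdiam
  have claim : ∀ v ∈ S'.faces.biUnion id, ∃ w : EuclideanSpace ℝ (Fin e),
      f '' openStar S' v ⊆ openStar Q w := by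
    intro v hv
    obtain ⟨σ', hσ', hvσ'⟩ := Finset.mem_biUnion.mp hv
    obtain ⟨σ, hσ, hsubhull⟩ := hsub.1 σ' hσ'
    have hvS : v ∈ S.space :=
      my_hull_subset_space hσ (hsubhull (subset_convexHull ℝ _ hvσ'))
    obtain ⟨i, hball⟩ := hle ⟨v, hvS⟩ (Set.mem_univ _)
    refine ⟨↑i, ?_⟩
    rintro y ⟨u, hu, rfl⟩
    obtain ⟨τ', hτ', hvτ', hu1, hu2⟩ := my_mem_openStar.mp hu
    obtain ⟨τ, hτ, hsubτ⟩ := hsub.1 τ' hτ'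
    have huS : u ∈ S.space := my_hull_subset_space hτ (hsubτ hu1)
    have hvhull : v ∈ convexHull ℝ (τ' : Set (EuclideanSpace ℝ (Fin d))) :=
      subset_convexHull ℝ _ hvτ'
    have hdist : dist u v < δ := lt_of_le_of_lt
      (Metric.dist_le_diam_of_mem (τ'.finite_toSet.isCompact_convexHull ℝ).isBounded hu1 hvhull)
      (hdiam τ' hτ')
    have hmem : (⟨u, huS⟩ : S.space) ∈ Metric.ball (⟨v, hvS⟩ : S.space) δ := by
      rw [Metric.mem_ball, Subtype.dist_eq]; exact hdist
    have hnot := hball hmem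
    rw [my_openStar_eq]
    exact ⟨hfm huS, hnot⟩
  choose! φ hφ using claim
  refine ⟨φ, ?_, fun v hv => hφ v hv⟩
  intro σ' hσ'
  obtain ⟨σ, hσ, hsubhull⟩ := hsub.1 σ' hσ'
  have hne := S'.nonempty_of_mem σ' hσ'
  have hn : (0 : ℝ) < σ'.card := by
    exact_mod_cast Finset.card_pos.mpr hne
  set a : EuclideanSpace ℝ (Fin d) → ℝ := fun _ => (σ'.card : ℝ)⁻¹ with ha
  have ha0 : ∀ x ∈ σ', 0 ≤ a x := fun x _ => le_of_lt (inv_pos.mpr hn)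
  have ha1 : ∑ x ∈ σ', a x = 1 := by
    simp [ha, Finset.sum_const, nsmul_eq_mul]
    field_simp
  set p := ∑ x ∈ σ', a x • x with hp
  have hpmem : p ∈ convexHull ℝ (σ' : Set (EuclideanSpace ℝ (Fin d))) := by
    rw [Finset.convexHull_eq]
    exact ⟨a, ha0, ha1, by rw [Finset.centerMass_eq_of_sum_1 _ _ ha1]; simp [hp]⟩
  have hps : ∀ v ∈ σ', p ∈ openStar S' v := fun v hv =>
    my_mem_openStar.mpr ⟨σ', hσ', hv, hpmem,
      my_not_mem_erase (S'.indep σ' hσ') ha0 ha1 hv (inv_pos.mpr hn)⟩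
  have hfp : f p ∈ Q.space := hfm (my_hull_subset_space hσ (hsubhull hpmem))
  have hfp' := hfp
  simp only [GeomComplex.space, Set.mem_iUnion, exists_prop] at hfp'
  obtain ⟨τ, hτ, hfpτ⟩ := hfp'
  have hsubset : σ'.image φ ⊆ τ := by
    intro z hz
    obtain ⟨v, hv, rfl⟩ := Finset.mem_image.mp hz
    have hv' : v ∈ S'.faces.biUnion id := Finset.mem_biUnion.mpr ⟨σ', hσ', hv⟩
    have hst : f p ∈ openStar Q (φ v) := hφ v hv' ⟨p, hps v hv, rfl⟩
    exact my_mem_face_of_openStar hτ hst hfpτ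
  exact Q.down_closed τ hτ _ hsubset (hne.image φ)
end

section
/- Let S be an abstract simplicial complex of dimension n that is non-branching (every (n−1)-simplex of S is contained in exactly one or exactly two n-simplices of S) and strongly connected (any two n-simplices of S can be joined by a finite sequence of n-simplices in which any two consecutive ones share an (n−1)-element subset that is a simplex of S). Let C^n be the 𝔽₂-vector space of all functions from the set of n-simplices of S to 𝔽₂, for each (n−1)-simplex τ of S let ∂*τ ∈ C^n be the indicator function of the set of n-simplices containing τ, and let B ⊆ C^n be the 𝔽₂-linear span of the functions ∂*τ over all (n−1)-simplices τ contained in exactly two n-simplices. Then the quotient space C^n / B is one-dimensional over 𝔽₂, and for every n-simplex σ of S the image in C^n / B of the indicator function of {σ} is nonzero (hence a basis of C^n / B). -/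
open scoped Classical
open Finset

/-- The type of `n`-simplices of `K` (simplices with `n + 1` vertices). -/
abbrev NSimp {V : Type*} (K : Finset (Finset V)) (n : ℕ) : Type _ :=
  {σ : Finset V // σ ∈ K ∧ σ.card = n + 1}

/-- The `𝔽₂`-vector space `C^n` of all functions from the set of `n`-simplices of `K`
to `𝔽₂`. -/
abbrev Cochain {V : Type*} (K : Finset (Finset V)) (n : ℕ) : Type _ :=
  NSimp K n → ZMod 2

/-- The coboundary `∂* τ ∈ C^n` of an `(n-1)`-simplex `τ`: the indicator function of
the set of `n`-simplices containing `τ`. -/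
noncomputable def cobIndicator {V : Type*} (K : Finset (Finset V)) (n : ℕ)
    (τ : Finset V) : Cochain K n :=
  fun σ => if τ ⊆ σ.1 then 1 else 0

/-- The `𝔽₂`-linear span `B ⊆ C^n` of the coboundaries `∂* τ` over all
`(n-1)`-simplices `τ` of `K` contained in exactly two `n`-simplices of `K`. -/
noncomputable def essentialCoboundaries {V : Type*} (K : Finset (Finset V)) (n : ℕ) :
    Submodule (ZMod 2) (Cochain K n) :=
  Submodule.span (ZMod 2)
    { f | ∃ τ ∈ K, τ.card = n ∧
        (K.filter fun σ => σ.card = n + 1 ∧ τ ⊆ σ).card = 2 ∧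
        f = cobIndicator K n τ }


/-! The sum of values `ε = coordSum : C^n → 𝔽₂` vanishes on `B`, since each generator `∂*τ` takes the value
`1` on exactly two simplices. Conversely, if `σ` and `σ'` share an `(n-1)`-face `τ`, non-branching
forces `∂*τ = e_σ + e_σ'`, so by strong connectivity all indicators `e_σ` are congruent modulo `B`;
writing `f = ∑ f ρ • e_ρ` then shows `ker ε ≤ B`. Hence `B = ker ε` and `ε` induces
`C^n / B ≃ 𝔽₂`, sending each `e_σ` to `1`. -/

section CoordSum

variable {R ι : Type*} [CommRing R] [Fintype ι]

noncomputable def coordSum : (ι → R) →ₗ[R] R := ∑ i, LinearMap.proj i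

theorem coordSum_apply (f : ι → R) : coordSum f = ∑ i, f i := by
  simp [coordSum]

theorem coordSum_single [DecidableEq ι] (i : ι) (r : R) : coordSum (Pi.single i r) = r := by
  simp [coordSum_apply]

theorem ker_coordSum_le [DecidableEq ι] {W : Submodule R (ι → R)} (i₀ : ι)
    (h : ∀ i, Pi.single i 1 - Pi.single i₀ 1 ∈ W) : LinearMap.ker coordSum ≤ W := by
  intro f hf
  have hsum : ∑ i, f i = 0 := by rwa [LinearMap.mem_ker, coordSum_apply] at hf
  have hf_eq : f = ∑ i, f i • (Pi.single i 1 - Pi.single i₀ 1 : ι → R) := by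
    simp only [smul_sub, Finset.sum_sub_distrib, ← Finset.sum_smul, hsum, zero_smul, sub_zero]
    exact (pi_eq_sum_univ' f).trans (by simp)
  rw [hf_eq]
  exact W.sum_mem fun i _ => W.smul_mem _ (h i)

theorem rank_quotient_ker_coordSum {F : Type*} [Field F] [Nonempty ι] :
    Module.rank F ((ι → F) ⧸ LinearMap.ker (coordSum : (ι → F) →ₗ[F] F)) = 1 := by
  have hsurj : Function.Surjective (coordSum : (ι → F) →ₗ[F] F) := fun r =>
    ⟨Pi.single (Classical.arbitrary ι) r, coordSum_single _ r⟩
  have h := (LinearMap.quotKerEquivOfSurjective _ hsurj).lift_rank_eq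
  rwa [Module.rank_self, Cardinal.lift_one, Cardinal.lift_eq_one] at h

theorem mk_single_ne_zero_of_le_ker_coordSum [DecidableEq ι] [Nontrivial R]
    {W : Submodule R (ι → R)}
    (hW : W ≤ LinearMap.ker coordSum) (i : ι) :
    Submodule.Quotient.mk (p := W) (Pi.single i 1) ≠ 0 := by
  rw [Ne, Submodule.Quotient.mk_eq_zero]
  intro h
  simpa [coordSum_single] using hW h

end CoordSum

section Pseudomanifold

variable {V : Type*} (K : Finset (Finset V)) (n : ℕ)

instance : Finite (NSimp K n) :=
  Finite.of_injective (fun ρ : NSimp K n => (⟨ρ.1, ρ.2.1⟩ : K))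
    fun _ _ h => Subtype.ext (Subtype.mk.inj h)

noncomputable instance : Fintype (NSimp K n) := Fintype.ofFinite _

noncomputable def topCofaces (τ : Finset V) : Finset (Finset V) :=
  K.filter fun σ => σ.card = n + 1 ∧ τ ⊆ σ

theorem mem_topCofaces {τ σ : Finset V} :
    σ ∈ topCofaces K n τ ↔ σ ∈ K ∧ σ.card = n + 1 ∧ τ ⊆ σ :=
  Finset.mem_filter

noncomputable def simplexIndicator (σ : Finset V) : Cochain K n :=
  fun ρ => if ρ.1 = σ then 1 else 0

theorem simplexIndicator_val (ρ : NSimp K n) : simplexIndicator K n ρ.1 = Pi.single ρ 1 := by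
  funext ρ'
  simp [simplexIndicator, Pi.single_apply, Subtype.ext_iff]

theorem coordSum_cobIndicator (τ : Finset V) :
    coordSum (cobIndicator K n τ) = ((topCofaces K n τ).card : ZMod 2) := by
  have hcard : (Finset.univ.filter fun ρ : NSimp K n => τ ⊆ ρ.1).card
      = (topCofaces K n τ).card :=
    Finset.card_bij (fun ρ _ => ρ.1)
      (fun ρ hρ => (mem_topCofaces K n).2 ⟨ρ.2.1, ρ.2.2, (Finset.mem_filter.1 hρ).2⟩)
      (fun _ _ _ _ h => Subtype.ext h)
      (fun σ hσ => by
        obtain ⟨hK, hc, hτ⟩ := (mem_topCofaces K n).1 hσ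
        exact ⟨⟨σ, hK, hc⟩, by simpa using hτ, rfl⟩)
  simp [coordSum_apply, cobIndicator, Finset.sum_boole, hcard]

theorem essentialCoboundaries_le_ker_coordSum :
    essentialCoboundaries K n ≤ LinearMap.ker coordSum := by
  rw [essentialCoboundaries, Submodule.span_le]
  rintro f ⟨τ, -, -, htwo, rfl⟩
  rw [SetLike.mem_coe, LinearMap.mem_ker, coordSum_cobIndicator]
  rw [topCofaces, htwo]
  rfl

theorem cobIndicator_eq_add {τ σ σ' : Finset V} (hne : σ ≠ σ')
    (hcof : topCofaces K n τ = {σ, σ'}) :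
    cobIndicator K n τ = simplexIndicator K n σ + simplexIndicator K n σ' := by
  funext ρ
  have hρ : τ ⊆ ρ.1 ↔ ρ.1 ∈ topCofaces K n τ := by
    rw [mem_topCofaces]
    exact ⟨fun h => ⟨ρ.2.1, ρ.2.2, h⟩, fun h => h.2.2⟩
  rw [hcof, Finset.mem_insert, Finset.mem_singleton] at hρ
  simp only [cobIndicator, simplexIndicator, Pi.add_apply, hρ]
  by_cases h : ρ.1 = σ
  · simp [h, hne]
  · simp [h]

variable {K n}

theorem mk_simplexIndicator_eq_of_adjacent
    (hnb : ∀ τ ∈ K, τ.card = n →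
      (K.filter fun σ => σ.card = n + 1 ∧ τ ⊆ σ).card = 1 ∨
      (K.filter fun σ => σ.card = n + 1 ∧ τ ⊆ σ).card = 2)
    {σ σ' τ : Finset V} (hσ : σ ∈ K ∧ σ.card = n + 1) (hσ' : σ' ∈ K ∧ σ'.card = n + 1)
    (hτ : τ ∈ K) (hτn : τ.card = n) (hτσ : τ ⊆ σ) (hτσ' : τ ⊆ σ') :
    Submodule.Quotient.mk (p := essentialCoboundaries K n) (simplexIndicator K n σ)
      = Submodule.Quotient.mk (simplexIndicator K n σ') := by
  rcases eq_or_ne σ σ' with rfl | hne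
  · rfl
  have hsub : {σ, σ'} ⊆ topCofaces K n τ := by
    simp only [Finset.insert_subset_iff, Finset.singleton_subset_iff, mem_topCofaces]
    exact ⟨⟨hσ.1, hσ.2, hτσ⟩, hσ'.1, hσ'.2, hτσ'⟩
  have hpair : ({σ, σ'} : Finset (Finset V)).card = 2 := Finset.card_pair hne
  have htwo : (topCofaces K n τ).card = 2 := by
    have hle := Finset.card_le_card hsub
    have h12 : (topCofaces K n τ).card = 1 ∨ (topCofaces K n τ).card = 2 := hnb τ hτ hτn
    omega
  have hcof : topCofaces K n τ = {σ, σ'} :=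
    (Finset.eq_of_subset_of_card_le hsub (by rw [hpair, htwo])).symm
  rw [Submodule.Quotient.eq, ZModModule.sub_eq_add, ← cobIndicator_eq_add K n hne hcof]
  exact Submodule.subset_span ⟨τ, hτ, hτn, htwo, rfl⟩

theorem mk_simplexIndicator_eq
    (hnb : ∀ τ ∈ K, τ.card = n →
      (K.filter fun σ => σ.card = n + 1 ∧ τ ⊆ σ).card = 1 ∨
      (K.filter fun σ => σ.card = n + 1 ∧ τ ⊆ σ).card = 2)
    (hsc : ∀ σ ∈ K, σ.card = n + 1 → ∀ σ' ∈ K, σ'.card = n + 1 →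
      ∃ (k : ℕ) (c : ℕ → Finset V), c 0 = σ ∧ c k = σ' ∧
        (∀ i ≤ k, c i ∈ K ∧ (c i).card = n + 1) ∧
        ∀ i < k, ∃ τ ∈ K, τ.card = n ∧ τ ⊆ c i ∧ τ ⊆ c (i + 1))
    (ρ ρ' : NSimp K n) :
    Submodule.Quotient.mk (p := essentialCoboundaries K n) (simplexIndicator K n ρ.1)
      = Submodule.Quotient.mk (simplexIndicator K n ρ'.1) := by
  obtain ⟨k, c, hc0, hck, hc, hstep⟩ := hsc ρ.1 ρ.2.1 ρ.2.2 ρ'.1 ρ'.2.1 ρ'.2.2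
  suffices h : ∀ i ≤ k, Submodule.Quotient.mk (p := essentialCoboundaries K n)
      (simplexIndicator K n (c 0)) = Submodule.Quotient.mk (simplexIndicator K n (c i)) by
    rw [← hc0, ← hck]; exact h k le_rfl
  intro i hi
  induction i with
  | zero => rfl
  | succ j ih =>
    obtain ⟨τ, hτ, hτn, hτj, hτj'⟩ := hstep j hi
    rw [ih (by omega)]
    exact mk_simplexIndicator_eq_of_adjacent hnb (hc j (by omega)) (hc (j + 1) hi)
      hτ hτn hτj hτj'

theorem essentialCoboundaries_eq_ker_coordSum
    (hnb : ∀ τ ∈ K, τ.card = n →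
      (K.filter fun σ => σ.card = n + 1 ∧ τ ⊆ σ).card = 1 ∨
      (K.filter fun σ => σ.card = n + 1 ∧ τ ⊆ σ).card = 2)
    (hsc : ∀ σ ∈ K, σ.card = n + 1 → ∀ σ' ∈ K, σ'.card = n + 1 →
      ∃ (k : ℕ) (c : ℕ → Finset V), c 0 = σ ∧ c k = σ' ∧
        (∀ i ≤ k, c i ∈ K ∧ (c i).card = n + 1) ∧
        ∀ i < k, ∃ τ ∈ K, τ.card = n ∧ τ ⊆ c i ∧ τ ⊆ c (i + 1))
    (ρ₀ : NSimp K n) :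
    essentialCoboundaries K n = LinearMap.ker coordSum := by
  refine le_antisymm (essentialCoboundaries_le_ker_coordSum K n) (ker_coordSum_le ρ₀ fun ρ => ?_)
  rw [← simplexIndicator_val, ← simplexIndicator_val, ← Submodule.Quotient.eq]
  exact mk_simplexIndicator_eq hnb hsc ρ ρ₀

end Pseudomanifold

theorem top_cohomology_of_pseudomanifold_general {V : Type*}
    (K : Finset (Finset V)) (n : ℕ)
    (hdim : (∃ σ ∈ K, σ.card = n + 1) ∧ ∀ σ ∈ K, σ.card ≤ n + 1)
    (hnb : ∀ τ ∈ K, τ.card = n →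
      (K.filter fun σ => σ.card = n + 1 ∧ τ ⊆ σ).card = 1 ∨
      (K.filter fun σ => σ.card = n + 1 ∧ τ ⊆ σ).card = 2)
    (hsc : ∀ σ ∈ K, σ.card = n + 1 → ∀ σ' ∈ K, σ'.card = n + 1 →
      ∃ (k : ℕ) (c : ℕ → Finset V), c 0 = σ ∧ c k = σ' ∧
        (∀ i ≤ k, c i ∈ K ∧ (c i).card = n + 1) ∧
        ∀ i < k, ∃ τ ∈ K, τ.card = n ∧ τ ⊆ c i ∧ τ ⊆ c (i + 1)) :
    Module.rank (ZMod 2) (Cochain K n ⧸ essentialCoboundaries K n) = 1 ∧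
    ∀ (σ : Finset V), σ ∈ K → σ.card = n + 1 →
      (Submodule.Quotient.mk (p := essentialCoboundaries K n)
        (fun ρ : NSimp K n => if ρ.1 = σ then 1 else 0)) ≠ 0 := by
  obtain ⟨σ₀, hσ₀, hc₀⟩ := hdim.1
  have : Nonempty (NSimp K n) := ⟨⟨σ₀, hσ₀, hc₀⟩⟩
  refine ⟨?_, fun σ hσ hc => ?_⟩
  · rw [essentialCoboundaries_eq_ker_coordSum hnb hsc ⟨σ₀, hσ₀, hc₀⟩]
    exact rank_quotient_ker_coordSum
  · have h := mk_single_ne_zero_of_le_ker_coordSum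
      (essentialCoboundaries_le_ker_coordSum K n) (⟨σ, hσ, hc⟩ : NSimp K n)
    rwa [← simplexIndicator_val] at h

/-- For a non-branching, strongly connected abstract simplicial complex `S` of
dimension `n`, the quotient `C^n / B` is one-dimensional over `𝔽₂`, and the image in
`C^n / B` of the indicator function of any `n`-simplex is nonzero (hence a basis). -/
theorem top_cohomology_of_pseudomanifold {V : Type*} [Fintype V]
    (K : Finset (Finset V)) (hK : IsAbstractComplex K) (n : ℕ)
    (hdim : (∃ σ ∈ K, σ.card = n + 1) ∧ ∀ σ ∈ K, σ.card ≤ n + 1)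
    (hnb : ∀ τ ∈ K, τ.card = n →
      (K.filter fun σ => σ.card = n + 1 ∧ τ ⊆ σ).card = 1 ∨
      (K.filter fun σ => σ.card = n + 1 ∧ τ ⊆ σ).card = 2)
    (hsc : ∀ σ ∈ K, σ.card = n + 1 → ∀ σ' ∈ K, σ'.card = n + 1 →
      ∃ (k : ℕ) (c : ℕ → Finset V), c 0 = σ ∧ c k = σ' ∧
        (∀ i ≤ k, c i ∈ K ∧ (c i).card = n + 1) ∧
        ∀ i < k, ∃ τ ∈ K, τ.card = n ∧ τ ⊆ c i ∧ τ ⊆ c (i + 1)) :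
    Module.rank (ZMod 2) (Cochain K n ⧸ essentialCoboundaries K n) = 1 ∧
    ∀ (σ : Finset V), σ ∈ K → σ.card = n + 1 →
      (Submodule.Quotient.mk (p := essentialCoboundaries K n)
        (fun ρ : NSimp K n => if ρ.1 = σ then 1 else 0)) ≠ 0 :=
  top_cohomology_of_pseudomanifold_general K n hdim hnb hsc
end
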